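/- The row sums of the W coefficient matrix are 1: for all 1 ≤ k ≤ n, Σ_{i=k}^{n} W^{n,k}_i = 1. -/

import Mathlib

open MeasureTheory Finset

/-- Coefficients `A^{n,k}_i` defined by `A^{n,k}_k = 1` and
`A^{n,k}_i = -∑_{j=1}^{i-k} C(n-i+j, j) · A^{n,k}_{i-j}` for `i > k`. -/
def Acoef (n k : ℕ) : ℕ → ℤ
  | i =>
    if i ≤ k then (if i = k then 1 else 0)
    else -∑ j ∈ (Finset.Icc 1 (i - k)).attach,
        ((n - i + j.1).choose j.1 : ℤ) * Acoef n k (i - j.1)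
  termination_by i => i
  decreasing_by
    have hj := j.2
    simp only [Finset.mem_Icc] at hj
    omega

/-- The `W` coefficients: `W^{n,k}_i = ∑_{j=k}^{i} C(n,j) · A^{n,j}_i`. -/
def Wcoef (n k i : ℕ) : ℤ := ∑ j ∈ Finset.Icc k i, (n.choose j : ℤ) * Acoef n j i

lemma key (N t : ℕ) (ht : 1 ≤ t) (htN : t ≤ N) :
    ∑ j ∈ Finset.range (t + 1),
      (((N - t + j).choose j : ℤ)) * ((-1) ^ (t - j) * ((N.choose (t - j) : ℤ))) = 0 := by
  rw [← Finset.sum_range_reflect]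
  simp only [Nat.add_sub_cancel]
  have h1 : ∀ s ∈ Finset.range (t + 1),
      (((N - t + (t - s)).choose (t - s) : ℤ)) * ((-1) ^ (t - (t - s)) * ((N.choose (t - (t - s)) : ℤ)))
        = (N.choose t : ℤ) * ((-1) ^ s * (t.choose s : ℤ)) := by
    intro s hs
    rw [Finset.mem_range] at hs
    have hst : s ≤ t := by omega
    have e1 : N - t + (t - s) = N - s := by omega
    have e2 : t - (t - s) = s := by omega
    rw [e1, e2]
    have := Nat.choose_mul (n := N) hst
    have hc : ((N.choose s : ℤ)) * ((N - s).choose (t - s) : ℤ) = (N.choose t : ℤ) * (t.choose s : ℤ) := by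
      exact_mod_cast this.symm
    ring_nf
    ring_nf at hc
    linear_combination ((-1:ℤ))^s * hc
  rw [Finset.sum_congr rfl h1, ← Finset.mul_sum]
  rw [Int.alternating_sum_range_choose_of_ne (by omega)]
  ring

lemma Acoef_eq (n k : ℕ) : ∀ i, k ≤ i → i ≤ n →
    Acoef n k i = (-1) ^ (i - k) * ((n - k).choose (i - k) : ℤ) := by
  intro i
  induction i using Nat.strong_induction_on with
  | _ i ih =>
    intro hki hin
    rcases eq_or_lt_of_le hki with h | h
    · rw [Acoef]
      simp [← h]
    · rw [Acoef]
      rw [if_neg (by omega)]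
      rw [Finset.sum_attach (Finset.Icc 1 (i - k))
        (fun j => ((n - i + j).choose j : ℤ) * Acoef n k (i - j))]
      have h2 : ∀ j ∈ Finset.Icc 1 (i - k),
          ((n - i + j).choose j : ℤ) * Acoef n k (i - j)
            = (((n - k) - (i - k) + j).choose j : ℤ) *
              ((-1) ^ ((i - k) - j) * (((n - k).choose ((i - k) - j) : ℤ))) := by
        intro j hj
        rw [Finset.mem_Icc] at hj
        rw [ih (i - j) (by omega) (by omega) (by omega)]
        have e1 : n - i + j = (n - k) - (i - k) + j := by omega
        have e2 : i - j - k = (i - k) - j := by omega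
        rw [e1, e2]
      rw [Finset.sum_congr rfl h2]
      set t := i - k with hT
      set N := n - k with hN
      have ht : 1 ≤ t := by omega
      have htN : t ≤ N := by omega
      have hkey := key N t ht htN
      have hset : Finset.range (t + 1) = insert 0 (Finset.Icc 1 t) := by
        ext x; simp [Finset.mem_range, Finset.mem_Icc]; omega
      rw [hset, Finset.sum_insert (by simp)] at hkey
      simp only [Nat.add_zero, Nat.sub_zero, Nat.choose_zero_right, Nat.cast_one, one_mul] at hkey
      linarith

/-- The row sums of the `W` coefficient matrix are `1`: for all `1 ≤ k ≤ n`,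
`∑_{i=k}^{n} W^{n,k}_i = 1`. -/
theorem Wcoef_row_sum (n k : ℕ) (hk : 1 ≤ k) (hkn : k ≤ n) :
    ∑ i ∈ Finset.Icc k n, Wcoef n k i = 1 := by
  unfold Wcoef
  rw [Finset.sum_comm' (s := Finset.Icc k n) (t := fun i => Finset.Icc k i)
    (t' := Finset.Icc k n) (s' := fun j => Finset.Icc j n) (h := by
      intro i j; simp only [Finset.mem_Icc]; omega)]
  have h1 : ∀ j ∈ Finset.Icc k n,
      ∑ i ∈ Finset.Icc j n, (n.choose j : ℤ) * Acoef n j i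
        = (n.choose j : ℤ) * (if n - j = 0 then 1 else 0) := by
    intro j hj
    rw [Finset.mem_Icc] at hj
    rw [← Finset.mul_sum]
    congr 1
    have h2 : ∀ i ∈ Finset.Icc j n, Acoef n j i = (-1) ^ (i - j) * ((n - j).choose (i - j) : ℤ) := by
      intro i hi
      rw [Finset.mem_Icc] at hi
      exact Acoef_eq n j i hi.1 hi.2
    rw [Finset.sum_congr rfl h2]
    have hIcc : Finset.Icc j n = Finset.Ico j (n + 1) := by
      ext x; simp [Finset.mem_Icc, Finset.mem_Ico]
    rw [hIcc, Finset.sum_Ico_eq_sum_range]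
    have h3 : ∀ s ∈ Finset.range (n + 1 - j),
        (-1:ℤ) ^ (j + s - j) * ((n - j).choose (j + s - j) : ℤ)
          = (-1:ℤ) ^ s * ((n - j).choose s : ℤ) := by
      intro s hs
      rw [Nat.add_sub_cancel_left]
    rw [Finset.sum_congr rfl h3]
    have he : n + 1 - j = (n - j) + 1 := by omega
    rw [he]
    exact Int.alternating_sum_range_choose
  rw [Finset.sum_congr rfl h1]
  rw [Finset.sum_eq_single n]
  · simp
  · intro j hj hjn
    rw [Finset.mem_Icc] at hj
    rw [if_neg (by omega)]
    ring
  · intro h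
    simp [Finset.mem_Icc, hkn] at h
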